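/- arXiv:2508.09306 — 3 statements merged into one kernel-verified Lean document; each statement's English description precedes it below -/
import Mathlib

section
/- Let H(x,y) = a·x² + b·x·y + c·y² with b ≠ 0 and a ≠ c, and set D = b⁴ - 8·a·b²·c + 4·a·c·(a+c)². If D ≥ 0, let Q = √D. Then the pair (x₁, y₁) with x₁ = (-b² + 2·c·(a+c) + Q)/(2·b·(a-c)) and y₁ = (b² - 2·a·(a+c) - Q)/(2·b·(a-c)) satisfies the closing equations H(0, y₁) = H(x₁, 1) and H(x₁, 0) = H(1, y₁). -/
/-- For `H(x,y) = a·x² + b·x·y + c·y²` with `b ≠ 0`, `a ≠ c` and nonnegative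
discriminant `D = b⁴ - 8·a·b²·c + 4·a·c·(a+c)²`, putting `Q = √D`, the pair
`(x₁, y₁)` with `x₁ = (-b² + 2c(a+c) + Q)/(2b(a-c))` and
`y₁ = (b² - 2a(a+c) - Q)/(2b(a-c))` solves the closing equations
`H(0,y₁) = H(x₁,1)` and `H(x₁,0) = H(1,y₁)`. -/
theorem stmt12 (a b c : ℝ) (hb : b ≠ 0) (hac : a ≠ c)
    (H : ℝ × ℝ → ℝ)
    (hH : ∀ p : ℝ × ℝ, H p = a * p.1 ^ 2 + b * p.1 * p.2 + c * p.2 ^ 2)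
    (D : ℝ) (hD : D = b ^ 4 - 8 * a * b ^ 2 * c + 4 * a * c * (a + c) ^ 2)
    (hDpos : 0 ≤ D)
    (Q x₁ y₁ : ℝ) (hQ : Q = Real.sqrt D)
    (hx₁ : x₁ = (-b ^ 2 + 2 * c * (a + c) + Q) / (2 * b * (a - c)))
    (hy₁ : y₁ = (b ^ 2 - 2 * a * (a + c) - Q) / (2 * b * (a - c))) :
    H (0, y₁) = H (x₁, 1) ∧ H (x₁, 0) = H (1, y₁) := by
  have hQ2 : Q ^ 2 = D := by rw [hQ, Real.sq_sqrt hDpos]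
  have hd : a - c ≠ 0 := sub_ne_zero.mpr hac
  have hden : 2 * b * (a - c) ≠ 0 := by positivity
  simp only [hH]
  subst hx₁ hy₁ hD
  refine ⟨?_, ?_⟩ <;> field_simp
  · linear_combination (c - a) * hQ2
  · linear_combination (a - c) * hQ2
end

section
/- Let H(x,y) = a·x² + b·x·y + c·y² with b ≠ 0 and a ≠ c, and suppose b⁴ - 8·a·b²·c + 4·a·c·(a+c)² < 0. Then the system of equations H(0,y) = H(x,1), H(x,0) = H(1,y) has no real solution (x,y) with x·y ≠ 0 other than possibly trivial ones; specifically, the system of two equations c·y² = a·x² + b·x + c and a·x² = a + b·y + c·y² has no real solution. -/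
/-- For `H(x,y) = a·x² + b·x·y + c·y²` with `b ≠ 0`, `a ≠ c`: if the
discriminant `b⁴ - 8·a·b²·c + 4·a·c·(a+c)²` is negative, then the system of
closing equations `c·y² = a·x² + b·x + c` and `a·x² = a + b·y + c·y²` has no
real solution. -/
theorem stmt13 (a b c : ℝ) (hb : b ≠ 0) (hac : a ≠ c)
    (hD : b ^ 4 - 8 * a * b ^ 2 * c + 4 * a * c * (a + c) ^ 2 < 0) :
    ¬ ∃ x y : ℝ, c * y ^ 2 = a * x ^ 2 + b * x + c ∧
      a * x ^ 2 = a + b * y + c * y ^ 2 := by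
  rintro ⟨x, y, h1, h2⟩
  have hs : b * y = -(a + c) - b * x := by linarith
  have hy2 : b ^ 2 * y ^ 2 = (a + c + b * x) ^ 2 := by
    calc b ^ 2 * y ^ 2 = (b * y) ^ 2 := by ring
      _ = (-(a + c) - b * x) ^ 2 := by rw [hs]
      _ = (a + c + b * x) ^ 2 := by ring
  have h3 : c * (a + c + b * x) ^ 2 = b ^ 2 * (a * x ^ 2 + b * x + c) := by
    linear_combination b ^ 2 * h1 - c * hy2
  have hsq : (2 * (a - c) * b ^ 2 * x + b * (b ^ 2 - 2 * c * (a + c))) ^ 2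
      = b ^ 2 * (b ^ 4 - 8 * a * b ^ 2 * c + 4 * a * c * (a + c) ^ 2)
        - 4 * (a - c) * b ^ 2 *
          (c * (a + c + b * x) ^ 2 - b ^ 2 * (a * x ^ 2 + b * x + c)) := by
    ring
  rw [h3] at hsq
  have hb2 : 0 < b ^ 2 := by positivity
  nlinarith [sq_nonneg (2 * (a - c) * b ^ 2 * x + b * (b ^ 2 - 2 * c * (a + c))),
    mul_pos hb2 (by linarith : (0:ℝ) < -(b ^ 4 - 8 * a * b ^ 2 * c + 4 * a * c * (a + c) ^ 2))]
end

section
/- Let H(x,y) = a₀·x^n + y·∏_{i=1}^{n-1}(x - i/n) with a₀ = (-1)^{n+1} and n ≥ 2. Then for each k ∈ {1, …, n-1}, the point x_k = k/n satisfies H(x_k, 0) = H(x_k, 1) = a₀·x_k^n, and the values a₀·(k/n)^n for k = 1, …, n-1 are pairwise distinct. Hence the closing equation H(x,0) = H(x,1) has at least n-1 distinct solutions in (0,1), lying on pairwise distinct level sets of H. -/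
/-- For `H(x,y) = a₀·xⁿ + y·∏_{i=1}^{n-1}(x - i/n)` with `a₀ = (-1)^{n+1}` and
`n ≥ 2`: each `x_k = k/n` (for `1 ≤ k ≤ n-1`) satisfies
`H(x_k,0) = H(x_k,1) = a₀·x_kⁿ`, these points lie in `(0,1)`, and the level
values `a₀·(k/n)ⁿ` are pairwise distinct. -/
theorem stmt16 (n : ℕ) (hn : 2 ≤ n) (a₀ : ℝ) (ha₀ : a₀ = (-1 : ℝ) ^ (n + 1))
    (H : ℝ → ℝ → ℝ)
    (hH : ∀ x y : ℝ, H x y =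
      a₀ * x ^ n + y * ∏ i ∈ Finset.Icc 1 (n - 1), (x - (i : ℝ) / n)) :
    (∀ k ∈ Finset.Icc 1 (n - 1),
      H ((k : ℝ) / n) 0 = a₀ * ((k : ℝ) / n) ^ n ∧
      H ((k : ℝ) / n) 1 = a₀ * ((k : ℝ) / n) ^ n ∧
      ((k : ℝ) / n) ∈ Set.Ioo (0 : ℝ) 1) ∧
    (∀ k ∈ Finset.Icc 1 (n - 1), ∀ l ∈ Finset.Icc 1 (n - 1),
      a₀ * ((k : ℝ) / n) ^ n = a₀ * ((l : ℝ) / n) ^ n → k = l) := by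
  have hn0 : (0 : ℝ) < n := by positivity
  constructor
  · intro k hk
    simp only [Finset.mem_Icc] at hk
    have hprod : (∏ i ∈ Finset.Icc 1 (n - 1), ((k : ℝ) / n - (i : ℝ) / n)) = 0 := by
      apply Finset.prod_eq_zero (i := k)
      · simp [Finset.mem_Icc, hk.1, hk.2]
      · ring
    refine ⟨by simp [hH], by simp [hH, hprod], ?_, ?_⟩
    · have : (0 : ℝ) < (k : ℝ) := by exact_mod_cast hk.1
      positivity
    · rw [div_lt_one hn0]
      have : k < n := lt_of_le_of_lt hk.2 (Nat.sub_lt (by omega) one_pos)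
      exact_mod_cast this
  · intro k hk l hl h
    simp only [Finset.mem_Icc] at hk hl
    have ha : a₀ ≠ 0 := by rw [ha₀]; positivity
    have h2 : ((k : ℝ) / n) ^ n = ((l : ℝ) / n) ^ n := mul_left_cancel₀ ha h
    have hkd : (k : ℝ) / n = (l : ℝ) / n :=
      (pow_left_inj₀ (by positivity) (by positivity) (by omega)).mp h2
    have : (k : ℝ) = l := by field_simp at hkd; exact_mod_cast hkd
    exact_mod_cast this
end
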